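/- Let W be a well-pointed space and n > 1. Write P_{n−1}(W) = W^{n−1}/W^{n−2} for the pinched space and 𝔉̂_k(W) = Σ(W^{k−1} ⊔ ∗). Then there is a pointed homotopy equivalence 𝔉̂_n(W) ≃ ΣP_{n−1}(W) ∨ 𝔉̂_{n−1}(W). -/

import Mathlib

/-!
STATEMENT 11: Let `W` be a well-pointed space and `n > 1` (written `n = m + 2`).
Writing `P_{n−1}(W) = W^{n−1}/W^{n−2}` for the pinched space (`W^{n−2} ⊂ W^{n−1}` via
the basepoint in the last coordinate) and `𝔉̂_k(W) = Σ(W^{k−1} ⊔ ∗)`, there is a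
pointed homotopy equivalence `𝔉̂_n(W) ≃ ΣP_{n−1}(W) ∨ 𝔉̂_{n−1}(W)`.
-/

open ContinuousMap Topology

/-- `(W, w₀)` is well-pointed: the inclusion `{w₀} ↪ W` has the homotopy extension
property. -/
def WellPointed.{u, v} (W : Type u) [TopologicalSpace W] (w₀ : W) : Prop :=
  ∀ (Z : Type v) (_ : TopologicalSpace Z) (f : C(W, Z)) (g : C(unitInterval, Z)),
    g 0 = f w₀ →
    ∃ G : C(W × unitInterval, Z), (∀ w, G (w, 0) = f w) ∧ ∀ t, G (w₀, t) = g t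

/-- The set collapsed in the reduced suspension of `(W, w₀)`. -/
def suspCollapsed (W : Type u) (w₀ : W) (p : W × unitInterval) : Prop :=
  p.2 = 0 ∨ p.2 = 1 ∨ p.1 = w₀

/-- The relation generating the reduced suspension quotient. -/
def SuspRel (W : Type u) (w₀ : W) (p q : W × unitInterval) : Prop :=
  suspCollapsed W w₀ p ∧ suspCollapsed W w₀ q

/-- The reduced suspension `ΣW` of the pointed space `(W, w₀)`. -/
def Susp (W : Type u) [TopologicalSpace W] (w₀ : W) : Type u :=
  Quot (SuspRel W w₀)

instance (W : Type u) [TopologicalSpace W] (w₀ : W) : TopologicalSpace (Susp W w₀) :=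
  instTopologicalSpaceQuot

/-- Basepoint of the reduced suspension. -/
def suspBase (W : Type u) [TopologicalSpace W] (w₀ : W) : Susp W w₀ :=
  Quot.mk _ (w₀, 0)

/-- The relation generating the wedge: both basepoints are identified. -/
def WedgeRel (X : Type u) (Y : Type u) (x₀ : X) (y₀ : Y) (p q : X ⊕ Y) : Prop :=
  (p = Sum.inl x₀ ∨ p = Sum.inr y₀) ∧ (q = Sum.inl x₀ ∨ q = Sum.inr y₀)

/-- The wedge (one-point union) `X ∨ Y` of pointed spaces `(X,x₀)` and `(Y,y₀)`. -/
def Wedge (X : Type u) (Y : Type u) [TopologicalSpace X] [TopologicalSpace Y]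
    (x₀ : X) (y₀ : Y) : Type u :=
  Quot (WedgeRel X Y x₀ y₀)

instance (X Y : Type u) [TopologicalSpace X] [TopologicalSpace Y] (x₀ : X) (y₀ : Y) :
    TopologicalSpace (Wedge X Y x₀ y₀) :=
  instTopologicalSpaceQuot

/-- Basepoint of the wedge. -/
def wedgeBase (X Y : Type u) [TopologicalSpace X] [TopologicalSpace Y] (x₀ : X) (y₀ : Y) :
    Wedge X Y x₀ y₀ :=
  Quot.mk _ (Sum.inl x₀)

/-- `(X,x₀)` and `(Y,y₀)` are pointed homotopy equivalent. -/
def PtdHomotopyEquiv (X : Type u) (Y : Type u) [TopologicalSpace X] [TopologicalSpace Y]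
    (x₀ : X) (y₀ : Y) : Prop :=
  ∃ (f : C(X, Y)) (g : C(Y, X)), f x₀ = y₀ ∧ g y₀ = x₀ ∧
    (g.comp f).HomotopicRel (ContinuousMap.id X) {x₀} ∧
    (f.comp g).HomotopicRel (ContinuousMap.id Y) {y₀}

variable (W : Type u) [TopologicalSpace W] (w₀ : W)

/-- The relation generating the pinched space `P_{k+1}(W) = W^{k+1}/W^k`, where
`W^k ⊂ W^{k+1}` via the basepoint in the last coordinate. -/
def PinchRel (k : ℕ) (p q : Fin (k + 1) → W) : Prop :=
  p (Fin.last k) = w₀ ∧ q (Fin.last k) = w₀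

/-- The pinched space `P_{k+1}(W) = W^{k+1}/W^k`. -/
def Pinched (k : ℕ) : Type u := Quot (PinchRel W w₀ k)

instance (k : ℕ) : TopologicalSpace (Pinched W w₀ k) := instTopologicalSpaceQuot

/-- Basepoint of the pinched space. -/
def pinchedBase (k : ℕ) : Pinched W w₀ k := Quot.mk _ (fun _ => w₀)

/-- `𝔉̂_{k+1}(W) = Σ(W^k ⊔ ∗)`. -/
def FHat (k : ℕ) : Type u := Susp ((Fin k → W) ⊕ Unit) (Sum.inr ())

instance (k : ℕ) : TopologicalSpace (FHat W k) := by unfold FHat; infer_instance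

/-- Basepoint of `𝔉̂_{k+1}(W)`. -/
def fHatBase (k : ℕ) : FHat W k := suspBase _ (Sum.inr ())


/-!
Write `X = W^{m+1}` and `A = W^m ⊂ X` (last coordinate `w₀`), so that `𝔉̂_{m+2}(W) = Σ(X ⊔ *)`,
`𝔉̂_{m+1}(W) = Σ(A ⊔ *)` and `P = X/A`. The splitting map sends the loop `[x, ·]` to `[[x], ·]`
in `ΣP` followed by `[(x₀, …, x_{m-1}), ·]` in `𝔉̂_{m+1}(W)`. Its homotopy inverse is the
inclusion on `𝔉̂_{m+1}(W)` and, on `ΣP`, a section built from a retraction of `W × I` onto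
`W × {0} ∪ {w₀} × I`, which is what well-pointedness provides: the loop at `x` runs up along `x`
with its last coordinate pushed towards `w₀`, to the height the retraction leaves over, and back
down along `(x₀, …, x_{m-1}, w₀)`; on `A` no height is left, so the loop is constant there. Both
composites are deformed to the identity by undoing the push, contracting the back-and-forth paths
and reparametrising the suspension coordinate.
-/

open Topology unitInterval

noncomputable section

section CollapseMap

variable {Y Q Z : Type*} [TopologicalSpace Y] [TopologicalSpace Q] [TopologicalSpace Z]

theorem Topology.IsQuotientMap.prodMap_id {X : Type*} [TopologicalSpace X] [LocallyCompactSpace X]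
    {π : Y → Q} (hπ : IsQuotientMap π) : IsQuotientMap (Prod.map π (id : X → X)) := by
  refine (isQuotientMap_iff _).2 ⟨.of_isOpen_preimage_iff_isOpen fun U => ⟨fun hU => ?_,
    fun hU => hU.preimage (hπ.continuous.prodMap continuous_id)⟩,
    hπ.surjective.prodMap Function.surjective_id⟩
  exact continuous_Prop.1 (hπ.continuous_lift_prod_left (g := (· ∈ U)) (continuous_Prop.2 hU))

structure IsCollapseMap (π : Y → Q) (c : Y → Prop) : Prop where
  isQuotientMap : IsQuotientMap π
  eq_iff {y y' : Y} : π y = π y' ↔ y = y' ∨ c y ∧ c y'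

theorem isCollapseMap_quot_mk (c : Y → Prop) :
    IsCollapseMap (Quot.mk fun y y' => c y ∧ c y') c where
  isQuotientMap := isQuotientMap_quot_mk
  eq_iff {y y'} := by
    have hR : Equivalence fun y y' : Y => y = y' ∨ c y ∧ c y' :=
      ⟨fun _ => Or.inl rfl, fun h => h.imp Eq.symm And.symm, fun h h' => by
        rcases h with rfl | h
        · exact h'
        rcases h' with rfl | h'
        · exact Or.inr h
        exact Or.inr ⟨h.1, h'.2⟩⟩
    refine ⟨fun h => hR.eqvGen_iff.1 ((Quot.eqvGen_exact h).mono fun _ _ => Or.inr), ?_⟩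
    rintro (rfl | h)
    exacts [rfl, Quot.sound h]

namespace IsCollapseMap

variable {π : Y → Q} {c : Y → Prop}

theorem eq_of_collapsed (hπ : IsCollapseMap π c) {y y' : Y} (hy : c y) (hy' : c y') :
    π y = π y' :=
  hπ.eq_iff.2 (Or.inr ⟨hy, hy'⟩)

theorem congr (hπ : IsCollapseMap π c) {c' : Y → Prop} (h : ∀ y, c y ↔ c' y) :
    IsCollapseMap π c' :=
  ⟨hπ.isQuotientMap, by simp only [hπ.eq_iff, h, implies_true]⟩

theorem comp {Q' : Type*} [TopologicalSpace Q'] {π₂ : Q' → Q} {c₂ : Q' → Prop}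
    (h₂ : IsCollapseMap π₂ c₂) {π₁ : Y → Q'} (h₁ : IsQuotientMap π₁)
    (hinj : ∀ {y y'}, π₁ y = π₁ y' → y = y' ∨ c₂ (π₁ y)) :
    IsCollapseMap (π₂ ∘ π₁) (c₂ ∘ π₁) where
  isQuotientMap := h₂.isQuotientMap.comp h₁
  eq_iff {y y'} := by
    refine ⟨fun h => ?_, ?_⟩
    · rcases h₂.eq_iff.1 h with h | h
      · exact (hinj h).imp_right fun hy =>
          ⟨hy, by simpa only [Function.comp_apply, h] using hy⟩
      · exact Or.inr h
    · rintro (rfl | h)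
      exacts [rfl, h₂.eq_of_collapsed h.1 h.2]

theorem factorsThrough {γ : Type*} (hπ : IsCollapseMap π c) {f : Y → γ} {z₀ : γ}
    (hf : ∀ y, c y → f y = z₀) :
    f.FactorsThrough π := fun y y' h => by
  rcases hπ.eq_iff.1 h with rfl | ⟨hy, hy'⟩
  exacts [rfl, (hf y hy).trans (hf y' hy').symm]

def desc (hπ : IsCollapseMap π c) (f : C(Y, Z)) (z₀ : Z) (hf : ∀ y, c y → f y = z₀) :
    C(Q, Z) :=
  hπ.isQuotientMap.lift (f := ⟨π, hπ.isQuotientMap.continuous⟩) f (hπ.factorsThrough hf)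

theorem desc_apply (hπ : IsCollapseMap π c) (f : C(Y, Z)) (z₀ : Z)
    (hf : ∀ y, c y → f y = z₀) (y : Y) : hπ.desc f z₀ hf (π y) = f y :=
  DFunLike.congr_fun (hπ.isQuotientMap.lift_comp (f := ⟨π, hπ.isQuotientMap.continuous⟩) f
    (hπ.factorsThrough hf)) y

theorem homotopicRel (hπ : IsCollapseMap π c) {f₀ f₁ : C(Q, Z)} {y₀ : Y} {q₀ : Q}
    (hy₀ : c y₀) (hq₀ : π y₀ = q₀) (H : C(I × Y, Z)) {z₀ : Z}
    (hc : ∀ s y, c y → H (s, y) = z₀)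
    (h₀ : ∀ y, H (0, y) = f₀ (π y)) (h₁ : ∀ y, H (1, y) = f₁ (π y)) :
    f₀.HomotopicRel f₁ {q₀} := by
  subst hq₀
  let G : I → C(Q, Z) := fun s => hπ.desc (H.curry s) z₀ (hc s)
  have hG : ∀ s y, G s (π y) = H (s, y) := fun s => hπ.desc_apply _ _ (hc s)
  have hsurj := hπ.isQuotientMap.surjective
  refine ⟨⟨⟨⟨fun p => G p.1 p.2, ?_⟩, fun q => ?_, fun q => ?_⟩, ?_⟩⟩
  · exact hπ.isQuotientMap.continuous_lift_prod_right (by simpa only [hG] using H.continuous)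
  · obtain ⟨y, rfl⟩ := hsurj q
    exact (hG 0 y).trans (h₀ y)
  · obtain ⟨y, rfl⟩ := hsurj q
    exact (hG 1 y).trans (h₁ y)
  · rintro s _ rfl
    exact (hG s y₀).trans ((hc s y₀ hy₀).trans ((hc 0 y₀ hy₀).symm.trans (h₀ y₀)))

end IsCollapseMap

end CollapseMap

theorem unitInterval.projIcc_eq_zero_iff {r : ℝ} :
    Set.projIcc (0 : ℝ) 1 zero_le_one r = 0 ↔ r ≤ 0 :=
  Set.projIcc_eq_left zero_lt_one

theorem unitInterval.projIcc_eq_one_iff {r : ℝ} :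
    Set.projIcc (0 : ℝ) 1 zero_le_one r = 1 ↔ 1 ≤ r :=
  Set.projIcc_eq_right zero_lt_one

namespace Susp

variable {α β : Type*} [TopologicalSpace α] [TopologicalSpace β] {a₀ : α}

/-- The suspension coordinate is clamped to `[0, 1]`, so `mk a r` is the base point whenever
`r ∉ (0, 1)`. -/
def mk (a : α) (r : ℝ) : Susp α a₀ := Quot.mk _ (a, Set.projIcc 0 1 zero_le_one r)

theorem isCollapseMap_mk :
    IsCollapseMap (fun p : α × ℝ => (mk p.1 p.2 : Susp α a₀))
      fun p => p.2 ≤ 0 ∨ 1 ≤ p.2 ∨ p.1 = a₀ := by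
  have hq : IsQuotientMap (Prod.map id (Set.projIcc (0 : ℝ) 1 zero_le_one) :
      α × ℝ → α × I) :=
    .of_inverse (f := Prod.map id Subtype.val) (by fun_prop) (by fun_prop) fun p => by
      simp only [Prod.map, id, Set.projIcc_val]
  refine ((isCollapseMap_quot_mk (suspCollapsed α a₀)).comp hq ?_).congr ?_
  · rintro ⟨a, r⟩ ⟨a', r'⟩ h
    simp only [Prod.map, Prod.mk.injEq, id] at h
    obtain ⟨rfl, h⟩ := h
    by_cases hr : r ≤ 0 ∨ 1 ≤ r
    · exact Or.inr (hr.imp projIcc_eq_zero_iff.2 (fun h => Or.inl (projIcc_eq_one_iff.2 h)))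
    push Not at hr
    have h' := congrArg Subtype.val h
    rw [Set.projIcc_of_mem _ ⟨hr.1.le, hr.2.le⟩, Set.coe_projIcc] at h'
    refine Or.inl (congrArg _ ?_)
    simp only [max_def, min_def] at h'
    split_ifs at h' <;> linarith
  · rintro ⟨a, r⟩
    simp only [Function.comp, Prod.map, id, suspCollapsed, projIcc_eq_zero_iff, projIcc_eq_one_iff]

theorem mk_eq_base {a : α} {r : ℝ} (h : r ≤ 0 ∨ 1 ≤ r ∨ a = a₀) :
    (mk a r : Susp α a₀) = suspBase α a₀ := by
  have hbase : suspBase α a₀ = mk a₀ 0 :=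
    congrArg (fun t => Quot.mk _ (a₀, t)) (projIcc_eq_zero_iff.2 le_rfl).symm
  rw [hbase]
  exact isCollapseMap_mk.eq_of_collapsed (y := (a, r)) (y' := (a₀, 0)) h (Or.inl le_rfl)

@[simp]
theorem mk_basepoint (r : ℝ) : (mk a₀ r : Susp α a₀) = suspBase α a₀ :=
  mk_eq_base (Or.inr (Or.inr rfl))

theorem mk_of_nonpos {a : α} {r : ℝ} (h : r ≤ 0) :
    (mk a r : Susp α a₀) = suspBase α a₀ :=
  mk_eq_base (Or.inl h)

theorem mk_of_one_le {a : α} {r : ℝ} (h : 1 ≤ r) :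
    (mk a r : Susp α a₀) = suspBase α a₀ :=
  mk_eq_base (Or.inr (Or.inl h))

@[fun_prop]
theorem _root_.Continuous.suspMk {γ : Type*} [TopologicalSpace γ] {f : γ → α} {g : γ → ℝ}
    (hf : Continuous f) (hg : Continuous g) : Continuous fun x => (mk (f x) (g x) : Susp α a₀) :=
  isCollapseMap_mk.isQuotientMap.continuous.comp (hf.prodMk hg)

def map {b₀ : β} (g : C(α, β)) (hg : g a₀ = b₀) : C(Susp α a₀, Susp β b₀) :=
  isCollapseMap_mk.desc ⟨fun p => mk (g p.1) p.2, by fun_prop⟩ (suspBase β b₀)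
    fun ⟨a, r⟩ h =>
      mk_eq_base (h.imp_right (Or.imp_right fun h : a = a₀ => h ▸ hg))

@[simp]
theorem map_mk {b₀ : β} (g : C(α, β)) (hg : g a₀ = b₀) (a : α) (r : ℝ) :
    map g hg (mk a r) = mk (g a) r :=
  isCollapseMap_mk.desc_apply _ _ _ (a, r)

/-- Interpolate linearly between `θ` and the identity. -/
theorem homotopicRel_of_reparam {Z : Type*} [TopologicalSpace Z] {f g : C(Susp α a₀, Z)}
    {θ : ℝ → ℝ} (hθ : Continuous θ) (hθ₀ : ∀ r ≤ 0, θ r ≤ 0)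
    (hθ₁ : ∀ r, 1 ≤ r → 1 ≤ θ r)
    (hg : ∀ a r, g (mk a r) = f (mk a (θ r))) : g.HomotopicRel f {suspBase α a₀} := by
  refine isCollapseMap_mk.homotopicRel (y₀ := (a₀, 0)) (Or.inr (Or.inr rfl)) (mk_basepoint 0)
    ⟨fun p => f (mk p.2.1 ((1 - p.1) * θ p.2.2 + p.1 * p.2.2)), by fun_prop⟩
    (z₀ := f (suspBase α a₀))
    ?_ (fun p => by simp [hg]) (fun p => by simp)
  rintro s ⟨a, r⟩ (hr | hr | rfl)
  all_goals simp only [ContinuousMap.coe_mk, mk_basepoint]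
  · rw [mk_of_nonpos]
    nlinarith [hθ₀ r hr, s.2.1, s.2.2]
  · rw [mk_of_one_le]
    nlinarith [hθ₁ r hr, s.2.1, s.2.2]

theorem isCollapseMap_mk_inl [Nonempty α] :
    IsCollapseMap (fun p : α × ℝ => (mk (Sum.inl p.1) p.2 : Susp (α ⊕ Unit) (Sum.inr ())))
      fun p => p.2 ≤ 0 ∨ 1 ≤ p.2 := by
  have hπ := isCollapseMap_mk (α := α ⊕ Unit) (a₀ := Sum.inr ())
  refine ⟨(isQuotientMap_iff _).2
    ⟨.of_isOpen_preimage_iff_isOpen fun U => ?_, fun q => ?_⟩, ?_⟩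
  · rw [← hπ.isQuotientMap.isCoinducing.isOpen_preimage,
      ← (Homeomorph.sumProdDistrib).symm.isOpen_preimage, isOpen_sum_iff]
    refine ⟨fun h => ⟨h, ?_⟩, fun h => h.1⟩
    convert isOpen_const (p := suspBase _ (Sum.inr ()) ∈ U) using 1
    ext ⟨⟨⟩, r⟩
    exact iff_of_eq (congrArg (· ∈ U) (mk_basepoint r))
  · obtain ⟨⟨a | ⟨⟩, r⟩, rfl⟩ := hπ.isQuotientMap.surjective q
    · exact ⟨(a, r), rfl⟩
    · exact ⟨(Classical.arbitrary α, 0), (mk_of_nonpos le_rfl).trans (mk_basepoint r).symm⟩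
  · intro p p'
    refine (hπ.eq_iff (y := (Sum.inl p.1, p.2)) (y' := (Sum.inl p'.1, p'.2))).trans ?_
    simp only [Prod.ext_iff, Sum.inl.injEq, reduceCtorEq, or_false]

end Susp

namespace Wedge

variable {A B : Type u} [TopologicalSpace A] [TopologicalSpace B] {a₀ : A} {b₀ : B}
  {Z : Type*} [TopologicalSpace Z]

def inl : C(A, Wedge A B a₀ b₀) := ⟨fun a => Quot.mk _ (Sum.inl a), by fun_prop⟩

def inr : C(B, Wedge A B a₀ b₀) := ⟨fun b => Quot.mk _ (Sum.inr b), by fun_prop⟩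

@[simp]
theorem inl_base : (inl a₀ : Wedge A B a₀ b₀) = wedgeBase A B a₀ b₀ := rfl

@[simp]
theorem inr_base : (inr b₀ : Wedge A B a₀ b₀) = wedgeBase A B a₀ b₀ :=
  Quot.sound ⟨Or.inr rfl, Or.inl rfl⟩

theorem isCollapseMap_mk :
    IsCollapseMap (Quot.mk (WedgeRel A B a₀ b₀))
      fun p => p = Sum.inl a₀ ∨ p = Sum.inr b₀ :=
  isCollapseMap_quot_mk _

def desc (f : C(A, Z)) (g : C(B, Z)) (h : f a₀ = g b₀) : C(Wedge A B a₀ b₀, Z) :=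
  isCollapseMap_mk.desc ⟨Sum.elim f g, by fun_prop⟩ (f a₀)
    (by rintro _ (rfl | rfl); exacts [rfl, h.symm])

@[simp]
theorem desc_inl (f : C(A, Z)) (g : C(B, Z)) (h : f a₀ = g b₀) (a : A) :
    desc f g h (inl a) = f a :=
  isCollapseMap_mk.desc_apply _ _ _ (Sum.inl a)

@[simp]
theorem desc_inr (f : C(A, Z)) (g : C(B, Z)) (h : f a₀ = g b₀) (b : B) :
    desc f g h (inr b) = g b :=
  isCollapseMap_mk.desc_apply _ _ _ (Sum.inr b)

theorem homotopicRel_of_comp_inl_of_comp_inr {f g : C(Wedge A B a₀ b₀, Z)}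
    (hl : (f.comp inl).HomotopicRel (g.comp inl) {a₀})
    (hr : (f.comp inr).HomotopicRel (g.comp inr) {b₀}) :
    f.HomotopicRel g {wedgeBase A B a₀ b₀} := by
  obtain ⟨Hl⟩ := hl
  obtain ⟨Hr⟩ := hr
  let H : C(I × (A ⊕ B), Z) :=
    ⟨fun p => Sum.elim (fun a => Hl (p.1, a)) (fun b => Hr (p.1, b)) p.2, by
      have : Continuous (Sum.elim Hl Hr ∘ Homeomorph.prodSumDistrib) := by fun_prop
      convert this using 2 with ⟨s, a | b⟩ <;> rfl⟩
  refine isCollapseMap_mk.homotopicRel (y₀ := Sum.inl a₀) (Or.inl rfl) rfl H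
    (z₀ := f (wedgeBase A B a₀ b₀)) ?_ ?_ ?_
  · rintro s _ (rfl | rfl)
    · exact Hl.eq_fst s rfl
    · exact (Hr.eq_fst s rfl).trans (congrArg f inr_base)
  · rintro (a | b)
    exacts [Hl.apply_zero a, Hr.apply_zero b]
  · rintro (a | b)
    exacts [Hl.apply_one a, Hr.apply_one b]

end Wedge

namespace FHat

variable {W} {k : ℕ}

def mk (x : Fin k → W) (r : ℝ) : FHat W k := Susp.mk (Sum.inl x) r

theorem isCollapseMap_mk [Nonempty W] :
    IsCollapseMap (fun p : (Fin k → W) × ℝ => mk p.1 p.2) fun p => p.2 ≤ 0 ∨ 1 ≤ p.2 :=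
  Susp.isCollapseMap_mk_inl

@[fun_prop]
theorem _root_.Continuous.fHatMk {γ : Type*} [TopologicalSpace γ] {f : γ → Fin k → W}
    {g : γ → ℝ} (hf : Continuous f) (hg : Continuous g) : Continuous fun x => mk (f x) (g x) :=
  Continuous.suspMk (continuous_inl.comp hf) hg

theorem mk_of_nonpos {x : Fin k → W} {r : ℝ} (h : r ≤ 0) : mk x r = fHatBase W k :=
  Susp.mk_of_nonpos h

def lift [Nonempty W] {Z : Type*} [TopologicalSpace Z] (f : (Fin k → W) × ℝ → Z)
    (hf : Continuous f) (z₀ : Z) (hc : ∀ p, p.2 ≤ 0 ∨ 1 ≤ p.2 → f p = z₀) :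
    C(FHat W k, Z) :=
  isCollapseMap_mk.desc ⟨f, hf⟩ z₀ hc

@[simp]
theorem lift_mk [Nonempty W] {Z : Type*} [TopologicalSpace Z] (f : (Fin k → W) × ℝ → Z)
    (hf : Continuous f) (z₀ : Z) (hc : ∀ p, p.2 ≤ 0 ∨ 1 ≤ p.2 → f p = z₀)
    (x : Fin k → W) (r : ℝ) :
    lift f hf z₀ hc (mk x r) = f (x, r) :=
  isCollapseMap_mk.desc_apply _ _ hc (x, r)

theorem mk_of_one_le {x : Fin k → W} {r : ℝ} (h : 1 ≤ r) : mk x r = fHatBase W k :=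
  Susp.mk_of_one_le h

theorem homotopicRel_of_family [Nonempty W] {Z : Type*} [TopologicalSpace Z]
    {f₀ f₁ : C(FHat W k, Z)} {H : I → (Fin k → W) × ℝ → Z}
    (hH : Continuous fun q : I × ((Fin k → W) × ℝ) => H q.1 q.2)
    {z₀ : Z} (hc : ∀ s p, p.2 ≤ 0 ∨ 1 ≤ p.2 → H s p = z₀)
    (h₀ : ∀ x r, H 0 (x, r) = f₀ (mk x r)) (h₁ : ∀ x r, H 1 (x, r) = f₁ (mk x r)) :
    f₀.HomotopicRel f₁ {fHatBase W k} :=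
  isCollapseMap_mk.homotopicRel (y₀ := (Classical.arbitrary _, 0)) (Or.inl le_rfl)
    (mk_of_nonpos le_rfl) ⟨_, hH⟩ (fun s p => hc s p) (fun p => h₀ p.1 p.2)
    (fun p => h₁ p.1 p.2)

theorem homotopicRel_of_reparam [Nonempty W] {Z : Type*} [TopologicalSpace Z]
    {f g : C(FHat W k, Z)} {θ : ℝ → ℝ} (hθ : Continuous θ)
    (hθ₀ : ∀ r ≤ 0, θ r ≤ 0) (hθ₁ : ∀ r, 1 ≤ r → 1 ≤ θ r)
    (hg : ∀ x r, g (mk x r) = f (mk x (θ r))) : g.HomotopicRel f {fHatBase W k} := by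
  refine Susp.homotopicRel_of_reparam hθ hθ₀ hθ₁ fun a r => ?_
  rcases a with x | ⟨⟩
  · exact hg x r
  · have hbase := hg (Classical.arbitrary _) 0
    rw [mk_of_nonpos le_rfl, mk_of_nonpos (hθ₀ 0 le_rfl)] at hbase
    simp only [Susp.mk_basepoint]
    exact hbase

end FHat

section Pinched

variable {W w₀} {k : ℕ}

def suspPinchedMk (x : Fin (k + 1) → W) (r : ℝ) :
    Susp (Pinched W w₀ k) (pinchedBase W w₀ k) :=
  Susp.mk (Quot.mk _ x) r

theorem isCollapseMap_pinch :
    IsCollapseMap (Quot.mk (PinchRel W w₀ k)) fun x => x (Fin.last k) = w₀ :=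
  isCollapseMap_quot_mk _

theorem pinchedMk_eq_base_iff {x : Fin (k + 1) → W} :
    (Quot.mk _ x : Pinched W w₀ k) = pinchedBase W w₀ k ↔ x (Fin.last k) = w₀ := by
  rw [pinchedBase, isCollapseMap_pinch.eq_iff]
  constructor
  · rintro (rfl | h)
    exacts [rfl, h.1]
  · exact fun h => Or.inr ⟨h, rfl⟩

theorem isCollapseMap_suspPinchedMk :
    IsCollapseMap
      (fun p : (Fin (k + 1) → W) × ℝ => (suspPinchedMk p.1 p.2 : Susp (Pinched W w₀ k) _))
      fun p => p.2 ≤ 0 ∨ 1 ≤ p.2 ∨ p.1 (Fin.last k) = w₀ := by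
  refine (Susp.isCollapseMap_mk.comp (isQuotientMap_quot_mk.prodMap_id) ?_).congr ?_
  · rintro ⟨x, r⟩ ⟨x', r'⟩ h
    simp only [Prod.map, id, Prod.mk.injEq] at h
    obtain ⟨h, rfl⟩ := h
    rcases isCollapseMap_pinch.eq_iff.1 h with rfl | h
    exacts [Or.inl rfl, Or.inr (Or.inr (Or.inr (pinchedMk_eq_base_iff.2 h.1)))]
  · rintro ⟨x, r⟩
    simp only [Function.comp, Prod.map, id, pinchedMk_eq_base_iff]

@[fun_prop]
theorem Continuous.suspPinchedMk {γ : Type*} [TopologicalSpace γ] {f : γ → Fin (k + 1) → W}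
    {g : γ → ℝ} (hf : Continuous f) (hg : Continuous g) :
    Continuous fun x => (suspPinchedMk (f x) (g x) : Susp (Pinched W w₀ k) _) :=
  isCollapseMap_suspPinchedMk.isQuotientMap.continuous.comp (hf.prodMk hg)

theorem suspPinchedMk_eq_base {x : Fin (k + 1) → W} {r : ℝ}
    (h : r ≤ 0 ∨ 1 ≤ r ∨ x (Fin.last k) = w₀) :
    (suspPinchedMk x r : Susp (Pinched W w₀ k) _) = suspBase _ (pinchedBase W w₀ k) :=
  Susp.mk_eq_base (h.imp_right (Or.imp_right pinchedMk_eq_base_iff.2))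

def suspPinchedLift {Z : Type*} [TopologicalSpace Z]
    (f : (Fin (k + 1) → W) × ℝ → Z) (hf : Continuous f) (z₀ : Z)
    (hc : ∀ p, p.2 ≤ 0 ∨ 1 ≤ p.2 ∨ p.1 (Fin.last k) = w₀ → f p = z₀) :
    C(Susp (Pinched W w₀ k) (pinchedBase W w₀ k), Z) :=
  isCollapseMap_suspPinchedMk.desc ⟨f, hf⟩ z₀ hc

@[simp]
theorem suspPinchedLift_mk {Z : Type*} [TopologicalSpace Z]
    (f : (Fin (k + 1) → W) × ℝ → Z) (hf : Continuous f) (z₀ : Z)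
    (hc : ∀ p, p.2 ≤ 0 ∨ 1 ≤ p.2 ∨ p.1 (Fin.last k) = w₀ → f p = z₀)
    (x : Fin (k + 1) → W) (r : ℝ) :
    suspPinchedLift f hf z₀ hc (suspPinchedMk x r) = f (x, r) :=
  isCollapseMap_suspPinchedMk.desc_apply _ _ hc (x, r)

theorem suspPinched_homotopicRel_of_family {Z : Type*} [TopologicalSpace Z]
    {f₀ f₁ : C(Susp (Pinched W w₀ k) (pinchedBase W w₀ k), Z)}
    {H : I → (Fin (k + 1) → W) × ℝ → Z} (hH : Continuous fun q : I × _ => H q.1 q.2)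
    {z₀ : Z} (hc : ∀ s p, p.2 ≤ 0 ∨ 1 ≤ p.2 ∨ p.1 (Fin.last k) = w₀ → H s p = z₀)
    (h₀ : ∀ x r, H 0 (x, r) = f₀ (suspPinchedMk x r))
    (h₁ : ∀ x r, H 1 (x, r) = f₁ (suspPinchedMk x r)) :
    f₀.HomotopicRel f₁ {suspBase _ (pinchedBase W w₀ k)} :=
  isCollapseMap_suspPinchedMk.homotopicRel (y₀ := (fun _ => w₀, 0)) (Or.inl le_rfl)
    (suspPinchedMk_eq_base (Or.inl le_rfl)) ⟨_, hH⟩ (fun s p => hc s p) (fun p => h₀ p.1 p.2)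
    (fun p => h₁ p.1 p.2)

end Pinched

/-- A retraction of the cylinder `W × I` onto `W × {0} ∪ {w₀} × I`. -/
structure CylinderRetraction where
  toContinuousMap : C(W × I, W × I)
  map_zero (w : W) : toContinuousMap (w, 0) = (w, 0)
  map_base (t : I) : toContinuousMap (w₀, t) = (w₀, t)
  snd_eq_zero_or_fst_eq (p : W × I) : (toContinuousMap p).2 = 0 ∨ (toContinuousMap p).1 = w₀

theorem WellPointed.nonempty_cylinderRetraction (hW : WellPointed.{u, u} W w₀) :
    Nonempty (CylinderRetraction W w₀) := by
  obtain ⟨G, hG₀, hG⟩ := hW {p : W × I // p.2 = 0 ∨ p.1 = w₀} _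
    ⟨fun w => ⟨(w, 0), Or.inl rfl⟩, by fun_prop⟩
    ⟨fun t => ⟨(w₀, t), Or.inr rfl⟩, by fun_prop⟩ rfl
  exact ⟨⟨(ContinuousMap.mk Subtype.val continuous_subtype_val).comp G,
    fun w => congrArg Subtype.val (hG₀ w), fun t => congrArg Subtype.val (hG t),
    fun p => (G p).2⟩⟩

namespace CylinderRetraction

variable {W w₀} (R : CylinderRetraction W w₀) {m : ℕ}

def pushLast (s : I) (x : Fin (m + 1) → W) : Fin (m + 1) → W :=
  Fin.snoc (Fin.init x) (R.toContinuousMap (x (Fin.last m), s)).1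

def pushTime (s : I) (x : Fin (m + 1) → W) : ℝ :=
  (R.toContinuousMap (x (Fin.last m), s)).2

@[fun_prop]
theorem continuous_pushLast {γ : Type*} [TopologicalSpace γ] {s : γ → I}
    {x : γ → Fin (m + 1) → W} (hs : Continuous s) (hx : Continuous x) :
    Continuous fun c => R.pushLast (s c) (x c) := by
  unfold pushLast
  fun_prop

@[fun_prop]
theorem continuous_pushTime {γ : Type*} [TopologicalSpace γ] {s : γ → I}
    {x : γ → Fin (m + 1) → W} (hs : Continuous s) (hx : Continuous x) :
    Continuous fun c => R.pushTime (s c) (x c) := by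
  unfold pushTime
  fun_prop

@[simp]
theorem pushLast_zero (x : Fin (m + 1) → W) : R.pushLast 0 x = x := by
  simp [pushLast, R.map_zero, Fin.snoc_init_self]

@[simp]
theorem pushTime_zero (x : Fin (m + 1) → W) : R.pushTime 0 x = 0 := by
  simp [pushTime, R.map_zero]

@[simp]
theorem init_pushLast (s : I) (x : Fin (m + 1) → W) : Fin.init (R.pushLast s x) = Fin.init x :=
  Fin.init_snoc _ _

theorem pushLast_of_last_eq (s : I) {x : Fin (m + 1) → W} (hx : x (Fin.last m) = w₀) :
    R.pushLast s x = Fin.snoc (Fin.init x) w₀ := by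
  simp [pushLast, hx, R.map_base]

theorem pushTime_of_last_eq (s : I) {x : Fin (m + 1) → W} (hx : x (Fin.last m) = w₀) :
    R.pushTime s x = s := by
  simp [pushTime, hx, R.map_base]

theorem pushTime_eq_zero_or (s : I) (x : Fin (m + 1) → W) :
    R.pushTime s x = 0 ∨ R.pushLast s x = Fin.snoc (Fin.init x) w₀ := by
  rcases R.snd_eq_zero_or_fst_eq (x (Fin.last m), s) with h | h
  · exact Or.inl (by simp [pushTime, h])
  · exact Or.inr (by simp [pushLast, h])

theorem pushTime_le_one (s : I) (x : Fin (m + 1) → W) : R.pushTime s x ≤ 1 :=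
  (R.toContinuousMap (x (Fin.last m), s)).2.2.2

end CylinderRetraction

abbrev SplitWedge (m : ℕ) : Type u :=
  Wedge (Susp (Pinched W w₀ m) (pinchedBase W w₀ m)) (FHat W m)
    (suspBase (Pinched W w₀ m) (pinchedBase W w₀ m)) (fHatBase W m)

section Splitting

variable {W w₀} {m : ℕ}

def splitFamily (s : I) (p : (Fin (m + 1) → W) × ℝ) : SplitWedge W w₀ m :=
  if 2 * p.2 ≤ 1 then Wedge.inl (suspPinchedMk p.1 (2 * p.2))
  else Wedge.inr (FHat.mk (Fin.init p.1) ((1 - s) * (2 * p.2 - 1)))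

@[fun_prop]
theorem continuous_splitFamily {γ : Type*} [TopologicalSpace γ] {s : γ → I}
    {p : γ → (Fin (m + 1) → W) × ℝ} (hs : Continuous s) (hp : Continuous p) :
    Continuous fun c => (splitFamily (s c) (p c) : SplitWedge W w₀ m) := by
  refine Continuous.if_le (by fun_prop) (by fun_prop) (by fun_prop) (by fun_prop) fun c hc => ?_
  rw [hc, sub_self, mul_zero, suspPinchedMk_eq_base (Or.inr (Or.inl le_rfl)),
    FHat.mk_of_nonpos le_rfl, Wedge.inl_base, Wedge.inr_base]

theorem splitFamily_of_nonpos (s : I) {x : Fin (m + 1) → W} {r : ℝ} (hr : r ≤ 0) :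
    (splitFamily s (x, r) : SplitWedge W w₀ m) = wedgeBase _ _ _ _ := by
  rw [splitFamily, if_pos (by linarith), suspPinchedMk_eq_base (Or.inl (by linarith)),
    Wedge.inl_base]

theorem splitFamily_zero_of_one_le {x : Fin (m + 1) → W} {r : ℝ} (hr : 1 ≤ r) :
    (splitFamily 0 (x, r) : SplitWedge W w₀ m) = wedgeBase _ _ _ _ := by
  rw [splitFamily, if_neg (by linarith), FHat.mk_of_one_le (by simp; linarith), Wedge.inr_base]

theorem splitFamily_one (x : Fin (m + 1) → W) (r : ℝ) :
    (splitFamily 1 (x, r) : SplitWedge W w₀ m) = Wedge.inl (suspPinchedMk x (2 * r)) := by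
  rw [splitFamily]
  split_ifs with h
  · rfl
  · rw [Set.Icc.coe_one, sub_self, zero_mul, FHat.mk_of_nonpos le_rfl, Wedge.inr_base,
      suspPinchedMk_eq_base (Or.inr (Or.inl (by linarith))), Wedge.inl_base]

variable (w₀) in
def splitMap : C(FHat W (m + 1), SplitWedge W w₀ m) :=
  haveI : Nonempty W := ⟨w₀⟩
  FHat.lift (splitFamily 0) (by fun_prop) _ fun _ hp =>
    hp.elim (splitFamily_of_nonpos 0) splitFamily_zero_of_one_le

theorem splitMap_mk (x : Fin (m + 1) → W) (r : ℝ) :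
    splitMap w₀ (FHat.mk x r) = splitFamily 0 (x, r) :=
  have : Nonempty W := ⟨w₀⟩
  FHat.lift_mk _ _ _ _ x r

theorem splitMap_base : splitMap w₀ (fHatBase W (m + 1)) = wedgeBase _ _ _ _ := by
  rw [← FHat.mk_of_nonpos (k := m + 1) (x := fun _ => w₀) le_rfl, splitMap_mk,
    splitFamily_of_nonpos 0 le_rfl]

variable (w₀) in
def suspSnoc : C(FHat W m, FHat W (m + 1)) :=
  Susp.map ⟨Sum.map (Fin.snoc · w₀) id, by fun_prop⟩ rfl

theorem suspSnoc_mk (y : Fin m → W) (r : ℝ) :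
    suspSnoc w₀ (FHat.mk y r) = FHat.mk (Fin.snoc y w₀) r :=
  Susp.map_mk _ _ _ _

theorem suspSnoc_base : suspSnoc w₀ (fHatBase W m) = fHatBase W (m + 1) := by
  rw [← FHat.mk_of_nonpos (k := m) (x := fun _ => w₀) le_rfl, suspSnoc_mk,
    FHat.mk_of_nonpos le_rfl]

namespace CylinderRetraction

variable (R : CylinderRetraction W w₀)

def loopPoint (t : I) (p : (Fin (m + 1) → W) × ℝ) : (Fin (m + 1) → W) × ℝ :=
  if 2 * p.2 ≤ 1 then (R.pushLast t p.1, 2 * p.2 * (1 - R.pushTime t p.1))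
  else (Fin.snoc (Fin.init p.1) w₀, (2 - 2 * p.2) * (1 - R.pushTime t p.1))

/-- At the turning point `r = 1/2` the two halves of the loop either differ only in the last
coordinate at height `1`, or coincide. -/
theorem continuous_comp_loopPoint {T Z : Type*} [TopologicalSpace T] [TopologicalSpace Z]
    {Φ : T → (Fin (m + 1) → W) × ℝ → Z} (hΦ : Continuous fun q : T × _ => Φ q.1 q.2)
    (hΦ₁ : ∀ c x x', Fin.init x = Fin.init x' → Φ c (x, 1) = Φ c (x', 1))
    {t : T → I} {p : T → (Fin (m + 1) → W) × ℝ} (ht : Continuous t) (hp : Continuous p) :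
    Continuous fun c => Φ c (R.loopPoint (t c) (p c)) := by
  simp only [loopPoint, apply_ite (Φ _)]
  refine Continuous.if_le (hΦ.comp₂ continuous_id (by fun_prop))
    (hΦ.comp₂ continuous_id (by fun_prop)) (by fun_prop) (by fun_prop) fun c hc => ?_
  rw [hc, show (2 : ℝ) - 1 = 1 by norm_num, one_mul]
  rcases R.pushTime_eq_zero_or (t c) (p c).1 with h | h
  · rw [h, sub_zero]
    exact hΦ₁ _ _ _ (by rw [init_pushLast, Fin.init_snoc])
  · rw [h]

theorem loopPoint_snd_nonpos (t : I) {x : Fin (m + 1) → W} {r : ℝ} (hr : r ≤ 0 ∨ 1 ≤ r) :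
    (R.loopPoint t (x, r)).2 ≤ 0 := by
  have h₁ := R.pushTime_le_one t x
  unfold loopPoint
  split_ifs with h
  · rcases hr with hr | hr
    · exact mul_nonpos_of_nonpos_of_nonneg (by linarith) (by linarith)
    · linarith
  · rcases hr with hr | hr
    · linarith
    · exact mul_nonpos_of_nonpos_of_nonneg (by linarith) (by linarith)

theorem loopPoint_fst_of_last_eq (t : I) {x : Fin (m + 1) → W} (hx : x (Fin.last m) = w₀)
    (r : ℝ) : (R.loopPoint t (x, r)).1 = Fin.snoc (Fin.init x) w₀ := by
  unfold loopPoint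
  split_ifs
  exacts [R.pushLast_of_last_eq t hx, rfl]

theorem loopPoint_one_snd_of_last_eq {x : Fin (m + 1) → W} (hx : x (Fin.last m) = w₀)
    (r : ℝ) :
    (R.loopPoint 1 (x, r)).2 = 0 := by
  unfold loopPoint
  split_ifs <;> simp [R.pushTime_of_last_eq 1 hx]

theorem loopPoint_zero (x : Fin (m + 1) → W) (r : ℝ) :
    R.loopPoint 0 (x, r) =
      if 2 * r ≤ 1 then (x, 2 * r) else (Fin.snoc (Fin.init x) w₀, 2 - 2 * r) := by
  simp [loopPoint]

def loop (t : I) (p : (Fin (m + 1) → W) × ℝ) : FHat W (m + 1) :=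
  FHat.mk (R.loopPoint t p).1 (R.loopPoint t p).2

@[fun_prop]
theorem continuous_loop {γ : Type*} [TopologicalSpace γ] {t : γ → I}
    {p : γ → (Fin (m + 1) → W) × ℝ} (ht : Continuous t) (hp : Continuous p) :
    Continuous fun c => R.loop (t c) (p c) :=
  R.continuous_comp_loopPoint (Φ := fun _ q => FHat.mk q.1 q.2) (by fun_prop)
    (fun _ _ _ _ => by rw [FHat.mk_of_one_le le_rfl, FHat.mk_of_one_le le_rfl]) ht hp

theorem loop_of_nonpos_or_one_le (t : I) {x : Fin (m + 1) → W} {r : ℝ}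
    (hr : r ≤ 0 ∨ 1 ≤ r) :
    R.loop t (x, r) = fHatBase W (m + 1) :=
  FHat.mk_of_nonpos (R.loopPoint_snd_nonpos t hr)

def sectionMap : C(Susp (Pinched W w₀ m) (pinchedBase W w₀ m), FHat W (m + 1)) :=
  suspPinchedLift (R.loop 1) (by fun_prop) _ fun ⟨x, r⟩ h => by
    rcases h with h | h | h
    · exact R.loop_of_nonpos_or_one_le 1 (Or.inl h)
    · exact R.loop_of_nonpos_or_one_le 1 (Or.inr h)
    · exact FHat.mk_of_nonpos (R.loopPoint_one_snd_of_last_eq h r).le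

theorem sectionMap_mk (x : Fin (m + 1) → W) (r : ℝ) :
    R.sectionMap (suspPinchedMk x r) = R.loop 1 (x, r) :=
  suspPinchedLift_mk _ _ _ _ x r

theorem sectionMap_base :
    R.sectionMap (suspBase _ (pinchedBase W w₀ m)) = fHatBase W (m + 1) := by
  rw [← suspPinchedMk_eq_base (x := fun _ => w₀) (Or.inl le_rfl), sectionMap_mk,
    R.loop_of_nonpos_or_one_le 1 (Or.inl le_rfl)]

def joinMap : C(SplitWedge W w₀ m, FHat W (m + 1)) :=
  Wedge.desc R.sectionMap (suspSnoc w₀) (by rw [R.sectionMap_base, suspSnoc_base])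

theorem joinMap_base : R.joinMap (wedgeBase _ _ _ _) = fHatBase W (m + 1) := by
  rw [← Wedge.inl_base, joinMap, Wedge.desc_inl, sectionMap_base]

end CylinderRetraction

namespace CylinderRetraction

variable (R : CylinderRetraction W w₀)

def joinSplitFamily (s : I) (p : (Fin (m + 1) → W) × ℝ) : FHat W (m + 1) :=
  if 2 * p.2 ≤ 1 then R.loop (σ s) (p.1, 2 * p.2)
  else FHat.mk (Fin.snoc (Fin.init p.1) w₀) (2 * p.2 - 1)

@[fun_prop]
theorem continuous_joinSplitFamily {γ : Type*} [TopologicalSpace γ] {s : γ → I}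
    {p : γ → (Fin (m + 1) → W) × ℝ} (hs : Continuous s) (hp : Continuous p) :
    Continuous fun c => R.joinSplitFamily (s c) (p c) := by
  refine Continuous.if_le (by fun_prop) (by fun_prop) (by fun_prop) (by fun_prop) fun c hc => ?_
  rw [hc, sub_self, R.loop_of_nonpos_or_one_le _ (Or.inr le_rfl), FHat.mk_of_nonpos le_rfl]

theorem joinSplitFamily_eq_base (s : I) {p : (Fin (m + 1) → W) × ℝ}
    (hp : p.2 ≤ 0 ∨ 1 ≤ p.2) :
    R.joinSplitFamily s p = fHatBase W (m + 1) := by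
  unfold joinSplitFamily
  split_ifs with h
  · exact R.loop_of_nonpos_or_one_le _ (hp.imp (by intro; linarith) (by intro; linarith))
  · exact FHat.mk_of_one_le (by rcases hp with hp | hp <;> linarith)

theorem joinMap_splitMap_mk (x : Fin (m + 1) → W) (r : ℝ) :
    R.joinMap (splitMap w₀ (FHat.mk x r)) = R.joinSplitFamily 0 (x, r) := by
  rw [splitMap_mk, splitFamily, joinSplitFamily]
  split_ifs
  · rw [joinMap, Wedge.desc_inl, sectionMap_mk, symm_zero]
  · rw [joinMap, Wedge.desc_inr, suspSnoc_mk, Set.Icc.coe_zero, sub_zero, one_mul]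

theorem joinSplitFamily_one (x : Fin (m + 1) → W) (r : ℝ) :
    R.joinSplitFamily 1 (x, r) = if 4 * r ≤ 1 then FHat.mk x (4 * r)
      else FHat.mk (Fin.snoc (Fin.init x) w₀) (max (2 - 4 * r) (2 * r - 1)) := by
  simp only [joinSplitFamily, symm_one, loop, loopPoint_zero]
  split_ifs
  all_goals first
    | (exfalso; linarith)
    | (congr 1; rw [max_eq_left (by linarith)]; ring)
    | (congr 1; rw [max_eq_right (by linarith)])
    | (congr 1; ring)

end CylinderRetraction

/-- Raising the suspension coordinate to at least `s` contracts the back-and-forth path along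
`(x₀, …, x_{m-1}, w₀)` in `joinSplitFamily 1`. -/
def cancelFamily (s : I) (p : (Fin (m + 1) → W) × ℝ) : FHat W (m + 1) :=
  if 4 * p.2 ≤ 1 then FHat.mk p.1 (4 * p.2)
  else FHat.mk (Fin.snoc (Fin.init p.1) w₀) (max (max (2 - 4 * p.2) (2 * p.2 - 1)) s)

@[fun_prop]
theorem continuous_cancelFamily {γ : Type*} [TopologicalSpace γ] {s : γ → I}
    {p : γ → (Fin (m + 1) → W) × ℝ} (hs : Continuous s) (hp : Continuous p) :
    Continuous fun c => (cancelFamily (w₀ := w₀) (s c) (p c)) := by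
  refine Continuous.if_le (by fun_prop) (by fun_prop) (by fun_prop) (by fun_prop) fun c hc => ?_
  rw [hc, FHat.mk_of_one_le le_rfl, FHat.mk_of_one_le]
  exact le_max_of_le_left (le_max_of_le_left (by norm_num))

theorem cancelFamily_eq_base (s : I) {p : (Fin (m + 1) → W) × ℝ}
    (hp : p.2 ≤ 0 ∨ 1 ≤ p.2) :
    cancelFamily (w₀ := w₀) s p = fHatBase W (m + 1) := by
  unfold cancelFamily
  split_ifs with h
  · exact FHat.mk_of_nonpos (by rcases hp with hp | hp <;> linarith)
  · refine FHat.mk_of_one_le (le_max_of_le_left (le_max_of_le_right ?_))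
    rcases hp with hp | hp <;> linarith

theorem cancelFamily_zero (R : CylinderRetraction W w₀) (p : (Fin (m + 1) → W) × ℝ) :
    cancelFamily (w₀ := w₀) 0 p = R.joinSplitFamily 1 p := by
  obtain ⟨x, r⟩ := p
  rw [R.joinSplitFamily_one, cancelFamily, Set.Icc.coe_zero, max_eq_left]
  rcases le_total r (1 / 2) with h | h
  · exact (le_max_left _ _).trans' (by linarith)
  · exact (le_max_right _ _).trans' (by linarith)

theorem cancelFamily_one (x : Fin (m + 1) → W) (r : ℝ) :
    cancelFamily (w₀ := w₀) 1 (x, r) = FHat.mk x (4 * r) := by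
  rw [cancelFamily, Set.Icc.coe_one]
  split_ifs with h
  · rfl
  · rw [FHat.mk_of_one_le (le_max_right _ _), FHat.mk_of_one_le (by linarith)]


theorem CylinderRetraction.joinMap_comp_splitMap_homotopicRel (R : CylinderRetraction W w₀) :
    (R.joinMap.comp (splitMap w₀)).HomotopicRel (ContinuousMap.id (FHat W (m + 1)))
      {fHatBase W (m + 1)} := by
  have : Nonempty W := ⟨w₀⟩
  let E₁ := FHat.lift (R.joinSplitFamily (m := m) 1) (by fun_prop) _ fun _ =>
    R.joinSplitFamily_eq_base 1
  let E₂ := FHat.lift (cancelFamily (w₀ := w₀) (m := m) 1) (by fun_prop) _ fun _ =>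
    cancelFamily_eq_base 1
  have uncollar : (R.joinMap.comp (splitMap w₀)).HomotopicRel E₁ {fHatBase W (m + 1)} :=
    FHat.homotopicRel_of_family (H := R.joinSplitFamily) (by fun_prop) R.joinSplitFamily_eq_base
      (fun x r => (R.joinMap_splitMap_mk x r).symm) (fun x r => (FHat.lift_mk ..).symm)
  have cancel : E₁.HomotopicRel E₂ {fHatBase W (m + 1)} :=
    FHat.homotopicRel_of_family (H := cancelFamily (w₀ := w₀)) (by fun_prop)
      cancelFamily_eq_base
      (fun x r => (cancelFamily_zero R (x, r)).trans (FHat.lift_mk ..).symm)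
      (fun x r => (FHat.lift_mk ..).symm)
  have reparam : E₂.HomotopicRel (ContinuousMap.id _) {fHatBase W (m + 1)} :=
    FHat.homotopicRel_of_reparam (θ := (4 * ·)) (by fun_prop) (fun r hr => by linarith)
      (fun r hr => by linarith) fun x r => (FHat.lift_mk ..).trans (cancelFamily_one x r)
  exact uncollar.trans (cancel.trans reparam)


namespace CylinderRetraction

variable (R : CylinderRetraction W w₀)

def splitLoopFamily (s t : I) (p : (Fin (m + 1) → W) × ℝ) : SplitWedge W w₀ m :=
  splitFamily s (R.loopPoint t p)

@[fun_prop]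
theorem continuous_splitLoopFamily {γ : Type*} [TopologicalSpace γ] {s t : γ → I}
    {p : γ → (Fin (m + 1) → W) × ℝ} (hs : Continuous s) (ht : Continuous t)
    (hp : Continuous p) :
    Continuous fun c => R.splitLoopFamily (s c) (t c) (p c) :=
  R.continuous_comp_loopPoint (Φ := fun c q => splitFamily (s c) q)
    ((continuous_splitFamily (by fun_prop) continuous_snd).comp (by fun_prop : Continuous
      fun q : γ × ((Fin (m + 1) → W) × ℝ) => q))
    (fun c x x' h => by
      rw [splitFamily, splitFamily, if_neg (by norm_num), if_neg (by norm_num), h])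
    ht hp

/-- On `W^m` the loop runs along `(x₀, …, x_{m-1}, w₀)`, which lies over the base point of
`ΣP`, up to height `1 - t`: its image is trivial once the `𝔉̂_{m+1}`-part is shrunk away
(`s = 1`) or the collar time is used up (`t = 1`). -/
theorem splitLoopFamily_eq_base {s t : I} (hst : s = 1 ∨ t = 1) {p : (Fin (m + 1) → W) × ℝ}
    (hp : p.2 ≤ 0 ∨ 1 ≤ p.2 ∨ p.1 (Fin.last m) = w₀) :
    R.splitLoopFamily s t p = wedgeBase _ _ _ _ := by
  obtain ⟨x, r⟩ := p
  rcases hp with hr | hr | hx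
  · exact splitFamily_of_nonpos s (R.loopPoint_snd_nonpos t (Or.inl hr))
  · exact splitFamily_of_nonpos s (R.loopPoint_snd_nonpos t (Or.inr hr))
  rcases hst with rfl | rfl
  · rw [splitLoopFamily, ← Prod.mk.eta (p := R.loopPoint _ _), splitFamily_one,
      R.loopPoint_fst_of_last_eq _ hx, suspPinchedMk_eq_base (Or.inr (Or.inr (Fin.snoc_last _ _))),
      Wedge.inl_base]
  · exact splitFamily_of_nonpos s (R.loopPoint_one_snd_of_last_eq hx r).le

theorem splitMap_joinMap_inl_mk (x : Fin (m + 1) → W) (r : ℝ) :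
    splitMap w₀ (R.joinMap (Wedge.inl (suspPinchedMk x r))) = R.splitLoopFamily 0 1 (x, r) := by
  rw [joinMap, Wedge.desc_inl, sectionMap_mk, loop, splitMap_mk]
  rfl

theorem splitLoopFamily_one_zero (x : Fin (m + 1) → W) (r : ℝ) :
    R.splitLoopFamily 1 0 (x, r) = Wedge.inl (suspPinchedMk x (4 * r)) := by
  rw [splitLoopFamily, ← Prod.mk.eta (p := R.loopPoint _ _), splitFamily_one, loopPoint_zero]
  split_ifs with h
  · rw [← mul_assoc]
    norm_num
  · rw [suspPinchedMk_eq_base (Or.inr (Or.inr (Fin.snoc_last (α := fun _ => W) _ _))),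
      suspPinchedMk_eq_base (Or.inr (Or.inl (by linarith)))]

theorem splitMap_comp_joinMap_comp_inl_homotopicRel :
    (((splitMap w₀).comp R.joinMap).comp Wedge.inl).HomotopicRel
      ((ContinuousMap.id (SplitWedge W w₀ m)).comp Wedge.inl)
      {suspBase _ (pinchedBase W w₀ m)} := by
  let M₁ := suspPinchedLift (R.splitLoopFamily (m := m) 1 1) (by fun_prop) _ fun _ =>
    R.splitLoopFamily_eq_base (Or.inl rfl)
  let M₀ := suspPinchedLift (R.splitLoopFamily (m := m) 1 0) (by fun_prop) _ fun _ =>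
    R.splitLoopFamily_eq_base (Or.inl rfl)
  have shrink : (((splitMap w₀).comp R.joinMap).comp Wedge.inl).HomotopicRel M₁
      {suspBase _ (pinchedBase W w₀ m)} :=
    suspPinched_homotopicRel_of_family (H := fun s => R.splitLoopFamily s 1) (by fun_prop)
      (fun _ _ => R.splitLoopFamily_eq_base (Or.inr rfl))
      (fun x r => (R.splitMap_joinMap_inl_mk x r).symm) (fun x r => (suspPinchedLift_mk ..).symm)
  have uncollar : M₁.HomotopicRel M₀ {suspBase _ (pinchedBase W w₀ m)} :=
    suspPinched_homotopicRel_of_family (H := fun s => R.splitLoopFamily 1 (σ s)) (by fun_prop)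
      (fun _ _ => R.splitLoopFamily_eq_base (Or.inl rfl))
      (fun x r => by rw [symm_zero]; exact (suspPinchedLift_mk ..).symm)
      (fun x r => by rw [symm_one]; exact (suspPinchedLift_mk ..).symm)
  have reparam : M₀.HomotopicRel ((ContinuousMap.id _).comp Wedge.inl)
      {suspBase _ (pinchedBase W w₀ m)} :=
    Susp.homotopicRel_of_reparam (θ := (4 * ·)) (by fun_prop) (fun r hr => by linarith)
      (fun r hr => by linarith) fun a r => by
        induction a using Quot.ind with
        | mk x => exact (suspPinchedLift_mk ..).trans (R.splitLoopFamily_one_zero x r)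
  exact shrink.trans (uncollar.trans reparam)

theorem splitMap_comp_joinMap_comp_inr_homotopicRel :
    (((splitMap w₀).comp R.joinMap).comp Wedge.inr).HomotopicRel
      ((ContinuousMap.id (SplitWedge W w₀ m)).comp Wedge.inr) {fHatBase W m} := by
  have : Nonempty W := ⟨w₀⟩
  refine FHat.homotopicRel_of_reparam (θ := (2 * · - 1)) (by fun_prop) (fun r hr => by linarith)
    (fun r hr => by linarith) fun x r => ?_
  simp only [ContinuousMap.comp_apply, ContinuousMap.id_apply, joinMap, Wedge.desc_inr,
    suspSnoc_mk, splitMap_mk, splitFamily, Fin.init_snoc, Set.Icc.coe_zero, sub_zero, one_mul]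
  split_ifs with h
  · rw [suspPinchedMk_eq_base (Or.inr (Or.inr (Fin.snoc_last _ _))), Wedge.inl_base,
      FHat.mk_of_nonpos (by linarith), Wedge.inr_base]
  · rfl

theorem splitMap_comp_joinMap_homotopicRel :
    ((splitMap w₀).comp R.joinMap).HomotopicRel (ContinuousMap.id (SplitWedge W w₀ m))
      {wedgeBase _ _ _ _} :=
  Wedge.homotopicRel_of_comp_inl_of_comp_inr R.splitMap_comp_joinMap_comp_inl_homotopicRel
    R.splitMap_comp_joinMap_comp_inr_homotopicRel

end CylinderRetraction

end Splitting

end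

theorem fHat_homotopyEquiv_suspPinched_wedge (m : ℕ)
    (hW : WellPointed.{u, u} W w₀) :
    PtdHomotopyEquiv (FHat W (m + 1))
      (Wedge (Susp (Pinched W w₀ m) (pinchedBase W w₀ m)) (FHat W m)
        (suspBase (Pinched W w₀ m) (pinchedBase W w₀ m)) (fHatBase W m))
      (fHatBase W (m + 1))
      (wedgeBase (Susp (Pinched W w₀ m) (pinchedBase W w₀ m)) (FHat W m)
        (suspBase (Pinched W w₀ m) (pinchedBase W w₀ m)) (fHatBase W m)) := by
  obtain ⟨R⟩ := hW.nonempty_cylinderRetraction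
  exact ⟨splitMap w₀, R.joinMap, splitMap_base, R.joinMap_base,
    R.joinMap_comp_splitMap_homotopicRel, R.splitMap_comp_joinMap_homotopicRel⟩
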